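/- In the field ℚ(q), for all nonnegative integers n, i, k: [n+i,i]·[n+k,k] = Σ_{j=0}^{i+k} (-1)^{i+j+k}·q^{(k+i-j)(2n+k+i-j+1)/2}·Mq(j;i,k)·[n+j,j], where for each j in the range max(i,k) ≤ j ≤ i+k the exponent (k+i-j)(2n+k+i-j+1)/2 is a nonnegative integer. -/

import Mathlib

/-- The $q$-factorial `(q)_n = (1-q)(1-q²)⋯(1-qⁿ)` in `ℚ(q) = RatFunc ℚ`. -/
noncomputable def qfac (n : ℕ) : RatFunc ℚ :=
  ∏ m ∈ Finset.range n, (1 - (RatFunc.X : RatFunc ℚ) ^ (m + 1))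

/-- The Gaussian binomial coefficient `[n, k]` in `ℚ(q)`. -/
noncomputable def qbinom (n k : ℕ) : RatFunc ℚ :=
  if k ≤ n then qfac n / (qfac k * qfac (n - k)) else 0

/-- The $q$-multinomial coefficient `Mq(j; i, k)` in `ℚ(q)`: it equals
`(q)_j/((q)_{j-i}(q)_{j-k}(q)_{i+k-j})` when `max i k ≤ j ≤ i + k`, and `0`
otherwise. -/
noncomputable def qmulti (j i k : ℕ) : RatFunc ℚ :=
  if i ≤ j ∧ k ≤ j ∧ j ≤ i + k then
    qfac j / (qfac (j - i) * qfac (j - k) * qfac (i + k - j))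
  else 0

/-!
With `a = q^(n+1)` and `b = q^i` the identity is the `q`-Chu–Vandermonde convolution
`(a; q)_k = ∑ₘ [k, m] a^m ∏_{t<m} (b - q^t) (ab; q)_(k-m)`, read with `m = i + k - j`:
here `(a; q)_k = (q)_(n+k) / (q)_n`, `(ab; q)_(k-m) = (q)_(n+i+k-m) / (q)_(n+i)` and
`a^m ∏_{t<m} (q^i - q^t) = (-1)^m q^(m(2n+m+1)/2) (q)_i / (q)_(i-m)`, which vanishes for `m > i`.
The convolution follows by induction on `k` from the `q`-Pascal rule, each term of `(a; q)_(k+1)`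
splitting along `1 - a q^k = (1 - ab q^(k-m)) + a q^(k-m) (b - q^m)`.
-/

open Finset

local notation "X" => (RatFunc.X : RatFunc ℚ)

noncomputable def qPochhammer (a : RatFunc ℚ) (k : ℕ) : RatFunc ℚ :=
  ∏ t ∈ range k, (1 - a * X ^ t)

lemma qPochhammer_succ (a : RatFunc ℚ) (k : ℕ) :
    qPochhammer a (k + 1) = qPochhammer a k * (1 - a * X ^ k) :=
  prod_range_succ _ _

lemma one_sub_X_pow_ne_zero {m : ℕ} (hm : m ≠ 0) : (1 : RatFunc ℚ) - X ^ m ≠ 0 := by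
  rw [sub_ne_zero]
  intro h
  have h2 : (1 : Polynomial ℚ) = Polynomial.X ^ m := by
    apply RatFunc.algebraMap_injective ℚ
    simpa [map_pow, RatFunc.algebraMap_X] using h
  simpa [Polynomial.coeff_X_pow, Ne.symm hm] using congrArg (Polynomial.coeff · 0) h2

lemma qfac_ne_zero (n : ℕ) : qfac n ≠ 0 :=
  prod_ne_zero_iff.mpr fun m _ => one_sub_X_pow_ne_zero m.succ_ne_zero

lemma qfac_zero : qfac 0 = 1 := rfl

lemma qfac_succ (n : ℕ) : qfac (n + 1) = qfac n * (1 - X ^ (n + 1)) :=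
  prod_range_succ _ _

lemma qfac_sub_one {n : ℕ} (hn : n ≠ 0) : qfac n = qfac (n - 1) * (1 - X ^ n) := by
  obtain ⟨m, rfl⟩ := Nat.exists_eq_succ_of_ne_zero hn
  exact qfac_succ m

lemma qfac_add (n k : ℕ) : qfac (n + k) = qfac n * qPochhammer (X ^ (n + 1)) k := by
  rw [qfac, prod_range_add, qPochhammer]
  congr 1
  refine prod_congr rfl fun t _ => ?_
  ring

lemma qbinom_of_le {n k : ℕ} (h : k ≤ n) : qbinom n k = qfac n / (qfac k * qfac (n - k)) :=
  if_pos h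

lemma qbinom_of_lt {n k : ℕ} (h : n < k) : qbinom n k = 0 :=
  if_neg (Nat.not_le.mpr h)

lemma qbinom_zero_right (n : ℕ) : qbinom n 0 = 1 := by
  rw [qbinom_of_le n.zero_le, qfac_zero, Nat.sub_zero, one_mul, div_self (qfac_ne_zero n)]

lemma qbinom_self (n : ℕ) : qbinom n n = 1 := by
  rw [qbinom_of_le le_rfl, Nat.sub_self, qfac_zero, mul_one, div_self (qfac_ne_zero n)]

lemma qbinom_succ_succ (k m : ℕ) :
    qbinom (k + 1) (m + 1) = qbinom k (m + 1) + X ^ (k - m) * qbinom k m := by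
  rcases lt_trichotomy m k with h | rfl | h
  · rw [qbinom_of_le (by omega : m + 1 ≤ k + 1), qbinom_of_le (by omega : m + 1 ≤ k),
      qbinom_of_le h.le, Nat.add_sub_add_right, qfac_succ k, qfac_succ m,
      qfac_sub_one (by omega : k - m ≠ 0), show k - m - 1 = k - (m + 1) by omega]
    have hX : X ^ (k + 1) = X ^ (k - m) * X ^ (m + 1) := by rw [← pow_add]; congr 1; omega
    have := qfac_ne_zero k
    have := qfac_ne_zero m
    have := qfac_ne_zero (k - (m + 1))
    have := one_sub_X_pow_ne_zero (by omega : k - m ≠ 0)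
    have := one_sub_X_pow_ne_zero m.succ_ne_zero
    rw [hX]
    field_simp
    ring
  · rw [qbinom_self, qbinom_of_lt m.lt_succ_self, qbinom_self, Nat.sub_self, pow_zero]
    ring
  · rw [qbinom_of_lt (by omega), qbinom_of_lt (by omega), qbinom_of_lt h]
    ring

lemma qbinom_succ_mul_qfac_succ (i m : ℕ) :
    qbinom i (m + 1) * qfac (m + 1) = qbinom i m * qfac m * (1 - X ^ (i - m)) := by
  rcases lt_or_ge m i with h | h
  · rw [qbinom_of_le (h : m + 1 ≤ i), qbinom_of_le h.le, qfac_succ m,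
      qfac_sub_one (by omega : i - m ≠ 0), show i - m - 1 = i - (m + 1) by omega]
    have := qfac_ne_zero m
    have := qfac_ne_zero (i - (m + 1))
    have := one_sub_X_pow_ne_zero m.succ_ne_zero
    have := one_sub_X_pow_ne_zero (by omega : i - m ≠ 0)
    field_simp
  · rw [qbinom_of_lt (by omega : i < m + 1), Nat.sub_eq_zero_of_le h, pow_zero, sub_self]
    ring

lemma prod_X_pow_sub_X_pow (i m : ℕ) :
    ∏ t ∈ range m, (X ^ i - X ^ t) = (-1) ^ m * X ^ m.choose 2 * (qbinom i m * qfac m) := by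
  induction m with
  | zero => simp [qbinom_zero_right, qfac_zero]
  | succ m ih =>
    rw [prod_range_succ, ih, qbinom_succ_mul_qfac_succ, Nat.choose_succ_succ, Nat.choose_one_right]
    rcases lt_or_ge m i with h | h
    · have hX : X ^ i = X ^ m * X ^ (i - m) := by rw [← pow_add]; congr 1; omega
      rw [hX]
      ring
    · rw [Nat.sub_eq_zero_of_le h, pow_zero, sub_self]
      rcases h.eq_or_lt with rfl | h
      · ring
      · rw [qbinom_of_lt h]
        ring

theorem qPochhammer_eq_sum (a b : RatFunc ℚ) (k : ℕ) :
    qPochhammer a k = ∑ m ∈ range (k + 1),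
      qbinom k m * a ^ m * (∏ t ∈ range m, (b - X ^ t)) * qPochhammer (a * b) (k - m) := by
  induction k with
  | zero => simp [qPochhammer, qbinom_self]
  | succ k ih =>
    set B : ℕ → RatFunc ℚ := fun m => ∏ t ∈ range m, (b - X ^ t)
    set A : ℕ → RatFunc ℚ := fun m =>
      qbinom k m * a ^ m * B m * qPochhammer (a * b) (k + 1 - m)
    set C : ℕ → RatFunc ℚ := fun m =>
      X ^ (k - m) * qbinom k m * a ^ (m + 1) * B (m + 1) * qPochhammer (a * b) (k - m)
    have hB_succ (m : ℕ) : B (m + 1) = B m * (b - X ^ m) := prod_range_succ _ _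
    have hsplit : ∀ m ∈ range (k + 1),
        qbinom k m * a ^ m * B m * qPochhammer (a * b) (k - m) * (1 - a * X ^ k) = A m + C m := by
      intro m hm
      have hmk : m ≤ k := Nat.lt_succ_iff.mp (mem_range.mp hm)
      have hX : X ^ k = X ^ (k - m) * X ^ m := by rw [← pow_add, Nat.sub_add_cancel hmk]
      simp only [A, C, show k + 1 - m = k - m + 1 by omega,
        qPochhammer_succ, hB_succ, hX]
      ring
    have hpascal (m : ℕ) :
        qbinom (k + 1) (m + 1) * a ^ (m + 1) * B (m + 1) * qPochhammer (a * b) (k + 1 - (m + 1))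
          = A (m + 1) + C m := by
      simp only [A, C, qbinom_succ_succ, Nat.add_sub_add_right]
      ring
    have hA : ∑ m ∈ range (k + 1), A m = ∑ m ∈ range (k + 1), A (m + 1) + A 0 := by
      rw [← sum_range_succ', sum_range_succ _ (k + 1), left_eq_add]
      simp only [A, qbinom_of_lt k.lt_succ_self, zero_mul]
    rw [qPochhammer_succ, ih, sum_mul, sum_congr rfl hsplit, sum_add_distrib, hA,
      sum_range_succ' _ (k + 1), sum_congr rfl fun m _ => hpascal m, sum_add_distrib]
    simp only [A, qbinom_zero_right, pow_zero, Nat.sub_zero]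
    ring

theorem qfac_add_mul_qfac_add (n i k : ℕ) :
    qfac (n + i) * qfac (n + k) = qfac n * ∑ m ∈ range (k + 1),
      (-1) ^ m * X ^ ((n + 1) * m + m.choose 2) *
        (qbinom i m * qbinom k m * qfac m * qfac (n + i + k - m)) := by
  rw [qfac_add n k, qPochhammer_eq_sum _ (X ^ i), mul_sum, mul_sum, mul_sum]
  refine sum_congr rfl fun m hm => ?_
  rw [prod_X_pow_sub_X_pow, show n + i + k - m = n + i + (k - m) by have := mem_range.mp hm; omega,
    qfac_add (n + i), ← pow_add, show n + 1 + i = n + i + 1 by ring]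
  ring

lemma mul_two_mul_add_add_one (n m : ℕ) :
    m * (2 * n + m + 1) = 2 * ((n + 1) * m + m.choose 2) := by
  induction m with
  | zero => simp
  | succ m ih =>
    rw [Nat.choose_succ_succ, Nat.choose_one_right]
    linear_combination ih

lemma qmulti_mul_qbinom {i k m : ℕ} (n : ℕ) (hm : m ≤ i + k) :
    qmulti (i + k - m) i k * qbinom (n + (i + k - m)) (i + k - m) =
      qbinom i m * qbinom k m * qfac m * qfac (n + i + k - m) / (qfac i * qfac k * qfac n) := by
  by_cases hmi : m ≤ i
  · by_cases hmk : m ≤ k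
    · rw [qmulti, if_pos ⟨by omega, by omega, by omega⟩, qbinom_of_le (Nat.le_add_left _ _),
        qbinom_of_le hmi, qbinom_of_le hmk, Nat.add_sub_cancel, show n + (i + k - m) = n + i + k - m
        by omega, show i + k - m - i = k - m by omega, show i + k - m - k = i - m by omega,
        show i + k - (i + k - m) = m by omega]
      have := qfac_ne_zero i
      have := qfac_ne_zero k
      have := qfac_ne_zero n
      have := qfac_ne_zero m
      have := qfac_ne_zero (i - m)
      have := qfac_ne_zero (k - m)
      have := qfac_ne_zero (i + k - m)
      field_simp
    · rw [qmulti, if_neg (by omega), qbinom_of_lt (by omega : k < m)]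
      ring
  · rw [qmulti, if_neg (by omega), qbinom_of_lt (by omega : i < m)]
    ring

theorem qbinom_mul_qbinom (n i k : ℕ) :
    qbinom (n + i) i * qbinom (n + k) k = ∑ m ∈ range (i + k + 1),
      (-1) ^ m * X ^ ((n + 1) * m + m.choose 2) *
        (qmulti (i + k - m) i k * qbinom (n + (i + k - m)) (i + k - m)) := by
  rw [qbinom_of_le (Nat.le_add_left i n), qbinom_of_le (Nat.le_add_left k n), Nat.add_sub_cancel,
    Nat.add_sub_cancel]
  calc qfac (n + i) / (qfac i * qfac n) * (qfac (n + k) / (qfac k * qfac n))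
      = qfac (n + i) * qfac (n + k) / (qfac n * (qfac i * qfac k * qfac n)) := by ring
    _ = ∑ m ∈ range (k + 1), (-1) ^ m * X ^ ((n + 1) * m + m.choose 2) *
          (qbinom i m * qbinom k m * qfac m * qfac (n + i + k - m)) /
            (qfac i * qfac k * qfac n) := by
        rw [qfac_add_mul_qfac_add, mul_div_mul_left _ _ (qfac_ne_zero n), sum_div]
    _ = ∑ m ∈ range (i + k + 1), (-1) ^ m * X ^ ((n + 1) * m + m.choose 2) *
          (qbinom i m * qbinom k m * qfac m * qfac (n + i + k - m)) /
            (qfac i * qfac k * qfac n) := by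
        refine sum_subset (range_subset_range.mpr (by omega)) fun m _ hm => ?_
        rw [qbinom_of_lt (by simpa using hm : k < m)]
        ring
    _ = _ := sum_congr rfl fun m hm => by
        rw [qmulti_mul_qbinom n (Nat.lt_succ_iff.mp (mem_range.mp hm))]
        ring

/-- Result 3.3.  For `j ≤ i + k` the exponent `(k+i-j)(2n+k+i-j+1)/2` is a
nonnegative integer; we record the divisibility claim and use natural-number
arithmetic (in which the division is exact) in the identity. -/
theorem stmt_13 (n i k : ℕ) :
    (∀ j : ℕ, max i k ≤ j → j ≤ i + k →
        2 ∣ (k + i - j) * (2 * n + k + i - j + 1)) ∧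
      qbinom (n + i) i * qbinom (n + k) k =
        ∑ j ∈ Finset.range (i + k + 1),
          (-1 : RatFunc ℚ) ^ (i + j + k) *
            (RatFunc.X : RatFunc ℚ) ^ ((k + i - j) * (2 * n + k + i - j + 1) / 2) *
            qmulti j i k * qbinom (n + j) j := by
  refine ⟨fun j _ hj => ?_, ?_⟩
  · rw [show 2 * n + k + i - j + 1 = 2 * n + (k + i - j) + 1 by omega, mul_two_mul_add_add_one]
    exact dvd_mul_right 2 _
  rw [qbinom_mul_qbinom, ← sum_range_reflect]
  refine sum_congr rfl fun j hj => ?_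
  have hj : j ≤ i + k := Nat.lt_succ_iff.mp (mem_range.mp hj)
  rw [Nat.add_sub_cancel, Nat.sub_sub_self hj, add_comm k i,
    show 2 * n + k + i - j + 1 = 2 * n + (i + k - j) + 1 by omega, mul_two_mul_add_add_one,
    Nat.mul_div_cancel_left _ two_pos, show i + j + k = i + k - j + 2 * j by omega,
    pow_add (-1 : RatFunc ℚ), pow_mul (-1 : RatFunc ℚ), neg_one_sq, one_pow, mul_one]
  ring
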